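/- For discrete random variables X, U on finite alphabets, deterministic functions f1, f2 of X, and reals p1 ≥ p2 in [0,1], 1 < λ ≤ p1/p2, the following holds: (λ^{-1}·p̄1 − p̄2)·H(f2(X)|U) + (λ^{-1}·p1 − p2)·H(f1(X)|U) ≤ (λ^{-1}·p1 − p2)·H(f1(X)|f2(X)), with equality when U = f2(X). -/
import Mathlib


open Real

/-- Probability that discrete random variable `X` equals `x`, under weight function `p`. -/
noncomputable def pr {Ω α : Type*} [Fintype Ω] [DecidableEq α] (p : Ω → ℝ) (X : Ω → α) (x : α) : ℝ :=
  ∑ ω, if X ω = x then p ω else 0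

/-- Shannon entropy (natural log) of a discrete random variable `X`. -/
noncomputable def ent {Ω α : Type*} [Fintype Ω] [Fintype α] [DecidableEq α] (p : Ω → ℝ) (X : Ω → α) : ℝ :=
  ∑ x, Real.negMulLog (pr p X x)

/-- Conditional Shannon entropy `H(X|Y) = H(X,Y) - H(Y)`. -/
noncomputable def condEnt {Ω α β : Type*} [Fintype Ω] [Fintype α] [Fintype β] [DecidableEq α] [DecidableEq β]
    (p : Ω → ℝ) (X : Ω → α) (Y : Ω → β) : ℝ :=
  ent p (fun ω => (X ω, Y ω)) - ent p Y

/-- Mutual information `I(X;Y) = H(X) + H(Y) - H(X,Y)`. -/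
noncomputable def mi {Ω α β : Type*} [Fintype Ω] [Fintype α] [Fintype β] [DecidableEq α] [DecidableEq β]
    (p : Ω → ℝ) (X : Ω → α) (Y : Ω → β) : ℝ :=
  ent p X + ent p Y - ent p (fun ω => (X ω, Y ω))

/-- Conditional mutual information `I(X;Y|Z) = H(X|Z) + H(Y|Z) - H(X,Y|Z)`. -/
noncomputable def condMI {Ω α β γ : Type*} [Fintype Ω] [Fintype α] [Fintype β] [Fintype γ]
    [DecidableEq α] [DecidableEq β] [DecidableEq γ]
    (p : Ω → ℝ) (X : Ω → α) (Y : Ω → β) (Z : Ω → γ) : ℝ :=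
  condEnt p X Z + condEnt p Y Z - condEnt p (fun ω => (X ω, Y ω)) Z

/-- `p` is a probability mass function on the finite sample space `Ω`. -/
def IsProb {Ω : Type*} [Fintype Ω] (p : Ω → ℝ) : Prop :=
  (∀ ω, 0 ≤ p ω) ∧ ∑ ω, p ω = 1

section helpers

section marg
variable {Ω α β γ : Type*} [Fintype Ω] [Fintype α] [Fintype β] [Fintype γ]
  [DecidableEq α] [DecidableEq β] [DecidableEq γ]

lemma my_marg2 (p : Ω → ℝ) (X : Ω → α) (Y : Ω → β) (y : β) :
    pr p Y y = ∑ x, pr p (fun ω => (X ω, Y ω)) (x, y) := by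
  unfold pr
  rw [Finset.sum_comm]
  refine Finset.sum_congr rfl fun ω _ => ?_
  by_cases h : Y ω = y
  · simp [h, Prod.ext_iff, Finset.sum_ite_eq]
  · simp [h, Prod.ext_iff]

lemma my_marg3_xy (p : Ω → ℝ) (X : Ω → α) (Y : Ω → β) (Z : Ω → γ) (x : α) (y : β) :
    pr p (fun ω => (X ω, Y ω)) (x, y) = ∑ z, pr p (fun ω => (X ω, Y ω, Z ω)) (x, y, z) := by
  unfold pr
  rw [Finset.sum_comm]
  refine Finset.sum_congr rfl fun ω _ => ?_
  by_cases h : X ω = x ∧ Y ω = y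
  · simp [h.1, h.2, Prod.ext_iff, Finset.sum_ite_eq]
  · rw [if_neg (by simp [Prod.ext_iff]; tauto)]
    refine (Finset.sum_eq_zero fun z _ => ?_).symm
    rw [if_neg (by simp [Prod.ext_iff]; tauto)]

lemma my_marg3_yz (p : Ω → ℝ) (X : Ω → α) (Y : Ω → β) (Z : Ω → γ) (y : β) (z : γ) :
    pr p (fun ω => (Y ω, Z ω)) (y, z) = ∑ x, pr p (fun ω => (X ω, Y ω, Z ω)) (x, y, z) := by
  unfold pr
  rw [Finset.sum_comm]
  refine Finset.sum_congr rfl fun ω _ => ?_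
  by_cases h : Y ω = y ∧ Z ω = z
  · simp [h.1, h.2, Prod.ext_iff, Finset.sum_ite_eq]
  · rw [if_neg (by simp [Prod.ext_iff]; tauto)]
    refine (Finset.sum_eq_zero fun x _ => ?_).symm
    rw [if_neg (by simp [Prod.ext_iff]; tauto)]

end marg

section helper2
variable {Ω α β γ : Type*} [Fintype Ω]

variable {Ω α β γ : Type*} [Fintype Ω]

lemma my_pr_nonneg [DecidableEq α] {p : Ω → ℝ} (hp : ∀ ω, 0 ≤ p ω) (X : Ω → α) (x : α) :
    0 ≤ pr p X x := by
  unfold pr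
  refine Finset.sum_nonneg fun ω _ => ?_
  split_ifs <;> simp [hp ω]

lemma my_negMulLog_sum_le {ι : Type*} (s : Finset ι) (f : ι → ℝ) (hf : ∀ i ∈ s, 0 ≤ f i) :
    negMulLog (∑ i ∈ s, f i) ≤ ∑ i ∈ s, negMulLog (f i) := by
  have h1 : negMulLog (∑ i ∈ s, f i) = ∑ i ∈ s, -(f i * Real.log (∑ j ∈ s, f j)) := by
    rw [negMulLog, neg_mul, Finset.sum_neg_distrib, ← Finset.sum_mul]
  rw [h1]
  refine Finset.sum_le_sum fun i hi => ?_
  rw [negMulLog, neg_mul, neg_le_neg_iff]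
  rcases eq_or_lt_of_le (hf i hi) with h | h
  · simp [← h]
  · exact mul_le_mul_of_nonneg_left
      (Real.log_le_log h (Finset.single_le_sum hf hi)) h.le

lemma my_ent_comp_inj [Fintype α] [Fintype β] [DecidableEq α] [DecidableEq β]
    (p : Ω → ℝ) (X : Ω → α) (g : α → β) (hg : Function.Injective g) :
    ent p (fun ω => g (X ω)) = ent p X := by
  unfold ent
  rw [← Finset.sum_subset (Finset.subset_univ (Finset.univ.image g))]
  · rw [Finset.sum_image (fun x _ y _ h => hg h)]
    refine Finset.sum_congr rfl fun x _ => ?_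
    congr 1
    unfold pr
    exact Finset.sum_congr rfl fun ω _ => by simp [hg.eq_iff]
  · intro b _ hb
    have h0 : pr p (fun ω => g (X ω)) b = 0 := by
      unfold pr
      refine Finset.sum_eq_zero fun ω _ => ?_
      rw [if_neg]
      intro h; exact hb (Finset.mem_image.2 ⟨X ω, Finset.mem_univ _, h⟩)
    simp [h0]


end helper2


lemma my_submodular {α γ : Type*} [Fintype α] [Fintype γ] (J : α → γ → ℝ)
    (hJ : ∀ x z, 0 ≤ J x z) :
    (∑ x, ∑ z, negMulLog (J x z)) + negMulLog (∑ x, ∑ z, J x z)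
      ≤ (∑ x, negMulLog (∑ z, J x z)) + ∑ z, negMulLog (∑ x, J x z) := by
  set A : α → ℝ := fun x => ∑ z, J x z with hA
  set B : γ → ℝ := fun z => ∑ x, J x z with hB
  set c : ℝ := ∑ x, ∑ z, J x z with hc
  have hAnn : ∀ x, 0 ≤ A x := fun x => Finset.sum_nonneg fun z _ => hJ x z
  have hBnn : ∀ z, 0 ≤ B z := fun z => Finset.sum_nonneg fun x _ => hJ x z
  have hcnn : 0 ≤ c := Finset.sum_nonneg fun x _ => hAnn x
  have hcA : c = ∑ x, A x := rfl
  have hcB : c = ∑ z, B z := by rw [hc]; exact Finset.sum_comm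
  by_cases h0 : c = 0
  · have hJ0 : ∀ x z, J x z = 0 := by
      intro x z
      have h1 : ∀ x ∈ Finset.univ, A x = 0 :=
        (Finset.sum_eq_zero_iff_of_nonneg (fun x _ => hAnn x)).1 (hcA ▸ h0)
      have h2 := (Finset.sum_eq_zero_iff_of_nonneg (fun z _ => hJ x z)).1
        (h1 x (Finset.mem_univ x))
      exact h2 z (Finset.mem_univ z)
    have hA0 : ∀ x, A x = 0 := fun x => by simp [hA, hJ0]
    have hB0 : ∀ z, B z = 0 := fun z => by simp [hB, hJ0]
    simp [hJ0, hA0, hB0, h0]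
  · have hcpos : 0 < c := lt_of_le_of_ne hcnn (Ne.symm h0)
    -- per-term bound
    have key : ∀ x z, J x z * Real.log (A x) + J x z * Real.log (B z)
        - J x z * Real.log (J x z) - J x z * Real.log c ≤ A x * B z / c - J x z := by
      intro x z
      rcases eq_or_lt_of_le (hJ x z) with h | h
      · rw [← h]
        norm_num
        exact div_nonneg (mul_nonneg (hAnn x) (hBnn z)) hcnn
      · have hApos : 0 < A x :=
          lt_of_lt_of_le h (Finset.single_le_sum (fun z _ => hJ x z) (Finset.mem_univ z))
        have hBpos : 0 < B z :=
          lt_of_lt_of_le h (Finset.single_le_sum (fun x _ => hJ x z) (Finset.mem_univ x))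
        have hlog : Real.log (A x * B z / (J x z * c)) ≤ A x * B z / (J x z * c) - 1 :=
          Real.log_le_sub_one_of_pos (by positivity)
        rw [Real.log_div (by positivity) (by positivity),
          Real.log_mul (ne_of_gt hApos) (ne_of_gt hBpos),
          Real.log_mul (ne_of_gt h) h0] at hlog
        have h2 := mul_le_mul_of_nonneg_left hlog h.le
        have h3 : J x z * (A x * B z / (J x z * c)) = A x * B z / c := by
          field_simp
        nlinarith [h2, h3]
    have hsum : ∑ x, ∑ z, (J x z * Real.log (A x) + J x z * Real.log (B z)
        - J x z * Real.log (J x z) - J x z * Real.log c)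
        ≤ ∑ x, ∑ z, (A x * B z / c - J x z) :=
      Finset.sum_le_sum fun x _ => Finset.sum_le_sum fun z _ => key x z
    have hzero : ∑ x, ∑ z, (A x * B z / c - J x z) = 0 := by
      have h1 : ∀ x, ∑ z, (A x * B z / c - J x z) = 0 := by
        intro x
        rw [Finset.sum_sub_distrib]
        have e1 : ∑ z, A x * B z / c = A x := by
          rw [← Finset.sum_div, ← Finset.mul_sum, ← hcB, mul_div_assoc, div_self h0, mul_one]
        have e2 : ∑ z, J x z = A x := rfl
        rw [e1, e2, sub_self]
      simp [h1]
    -- expansions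
    have hAe : ∀ x, negMulLog (A x) = ∑ z, -(J x z * Real.log (A x)) := by
      intro x
      rw [negMulLog, neg_mul, Finset.sum_neg_distrib, ← Finset.sum_mul]
    have hBe : ∀ z, negMulLog (B z) = ∑ x, -(J x z * Real.log (B z)) := by
      intro z
      rw [negMulLog, neg_mul, Finset.sum_neg_distrib, ← Finset.sum_mul]
    have hce : negMulLog c = ∑ x, ∑ z, -(J x z * Real.log c) := by
      rw [negMulLog, neg_mul]
      rw [show ∑ x, ∑ z, -(J x z * Real.log c) = ∑ x, -(A x * Real.log c) from
        Finset.sum_congr rfl fun x _ => by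
          rw [Finset.sum_neg_distrib, ← Finset.sum_mul]]
      rw [Finset.sum_neg_distrib, ← Finset.sum_mul]
    have hid : (∑ x, ∑ z, negMulLog (J x z)) + negMulLog c
        - ((∑ x, negMulLog (A x)) + ∑ z, negMulLog (B z))
        = ∑ x, ∑ z, (J x z * Real.log (A x) + J x z * Real.log (B z)
            - J x z * Real.log (J x z) - J x z * Real.log c) := by
      rw [hce, Finset.sum_congr rfl fun x (_ : x ∈ Finset.univ) => hAe x,
        Finset.sum_congr rfl fun z (_ : z ∈ Finset.univ) => hBe z,
        Finset.sum_comm (f := fun z x => -(J x z * Real.log (B z)))]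
      simp only [← Finset.sum_add_distrib, ← Finset.sum_sub_distrib]
      refine Finset.sum_congr rfl fun x _ => Finset.sum_congr rfl fun z _ => ?_
      rw [negMulLog, neg_mul]
      ring
    have hfin : ∑ x, ∑ z, (J x z * Real.log (A x) + J x z * Real.log (B z)
        - J x z * Real.log (J x z) - J x z * Real.log c) ≤ 0 := hzero ▸ hsum
    linarith [hid, hfin]

section main
variable {Ω α β γ : Type*} [Fintype Ω] [Fintype α] [Fintype β] [Fintype γ]
  [DecidableEq α] [DecidableEq β] [DecidableEq γ]

lemma my_condEnt_nonneg {p : Ω → ℝ} (hp : ∀ ω, 0 ≤ p ω) (X : Ω → α) (Y : Ω → β) :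
    0 ≤ condEnt p X Y := by
  unfold condEnt
  rw [sub_nonneg]
  unfold ent
  rw [Fintype.sum_prod_type, Finset.sum_comm]
  refine Finset.sum_le_sum fun y _ => ?_
  rw [my_marg2 p X Y y]
  exact my_negMulLog_sum_le _ _ fun x _ => my_pr_nonneg hp _ _

lemma my_condEnt_pair_le {p : Ω → ℝ} (hp : ∀ ω, 0 ≤ p ω) (X : Ω → α) (Y : Ω → β) (Z : Ω → γ) :
    condEnt p X (fun ω => (Y ω, Z ω)) ≤ condEnt p X Y := by
  unfold condEnt ent
  have e1 : ∑ v : α × β × γ, negMulLog (pr p (fun ω => (X ω, Y ω, Z ω)) v)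
      = ∑ y, ∑ x, ∑ z, negMulLog (pr p (fun ω => (X ω, Y ω, Z ω)) (x, y, z)) := by
    rw [Fintype.sum_prod_type, Finset.sum_comm, Fintype.sum_prod_type]
    exact Finset.sum_congr rfl fun y _ => Finset.sum_comm
  have e2 : ∑ v : β × γ, negMulLog (pr p (fun ω => (Y ω, Z ω)) v)
      = ∑ y, ∑ z, negMulLog (pr p (fun ω => (Y ω, Z ω)) (y, z)) := by rw [Fintype.sum_prod_type]
  have e3 : ∑ v : α × β, negMulLog (pr p (fun ω => (X ω, Y ω)) v)
      = ∑ y, ∑ x, negMulLog (pr p (fun ω => (X ω, Y ω)) (x, y)) := by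
    rw [Fintype.sum_prod_type, Finset.sum_comm]
  rw [e1, e2, e3]
  rw [← Finset.sum_sub_distrib, ← Finset.sum_sub_distrib]
  refine Finset.sum_le_sum fun y _ => ?_
  rw [sub_le_sub_iff]
  have key := my_submodular (fun x z => pr p (fun ω => (X ω, Y ω, Z ω)) (x, y, z))
    (fun x z => my_pr_nonneg hp _ _)
  have m1 : ∀ x, pr p (fun ω => (X ω, Y ω)) (x, y)
      = ∑ z, pr p (fun ω => (X ω, Y ω, Z ω)) (x, y, z) := fun x => my_marg3_xy p X Y Z x y
  have m2 : ∀ z, pr p (fun ω => (Y ω, Z ω)) (y, z)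
      = ∑ x, pr p (fun ω => (X ω, Y ω, Z ω)) (x, y, z) := fun z => my_marg3_yz p X Y Z y z
  have m3 : pr p Y y = ∑ x, ∑ z, pr p (fun ω => (X ω, Y ω, Z ω)) (x, y, z) := by
    rw [my_marg2 p X Y y]
    exact Finset.sum_congr rfl fun x _ => m1 x
  simp only [m1, m2, m3]
  exact key


end main
end helpers

set_option linter.unusedSectionVars false

/-- for `p1 ≥ p2` in `[0,1]` and `1 < λ ≤ p1/p2`,
`(λ⁻¹ p̄1 − p̄2) H(f2(X)|U) + (λ⁻¹ p1 − p2) H(f1(X)|U) ≤ (λ⁻¹ p1 − p2) H(f1(X)|f2(X))`,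
with equality when `U = f2(X)`. -/
theorem stmt3 {Ω 𝒳 𝒰 𝒴 : Type*} [Fintype Ω] [Fintype 𝒳] [Fintype 𝒰] [Fintype 𝒴]
    [DecidableEq 𝒳] [DecidableEq 𝒰] [DecidableEq 𝒴]
    (p : Ω → ℝ) (hp : IsProb p) (X : Ω → 𝒳) (U : Ω → 𝒰) (f1 f2 : 𝒳 → 𝒴)
    (lam p1 p2 : ℝ) (hp1 : p1 ∈ Set.Icc (0:ℝ) 1) (hp2 : p2 ∈ Set.Icc (0:ℝ) 1)
    (h12 : p2 ≤ p1) (hlam1 : 1 < lam) (hlam2 : lam ≤ p1 / p2) :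
    (lam⁻¹ * (1 - p1) - (1 - p2)) * condEnt p (fun ω => f2 (X ω)) U
      + (lam⁻¹ * p1 - p2) * condEnt p (fun ω => f1 (X ω)) U
      ≤ (lam⁻¹ * p1 - p2) * condEnt p (fun ω => f1 (X ω)) (fun ω => f2 (X ω))
    ∧ (lam⁻¹ * (1 - p1) - (1 - p2)) * condEnt p (fun ω => f2 (X ω)) (fun ω => f2 (X ω))
      + (lam⁻¹ * p1 - p2) * condEnt p (fun ω => f1 (X ω)) (fun ω => f2 (X ω))
      = (lam⁻¹ * p1 - p2) * condEnt p (fun ω => f1 (X ω)) (fun ω => f2 (X ω)) := by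
  have hnn := hp.1
  have hlam0 : (0:ℝ) < lam := lt_trans one_pos hlam1
  -- equality part
  have h22 : ent p (fun ω => (f2 (X ω), f2 (X ω))) = ent p (fun ω => f2 (X ω)) :=
    my_ent_comp_inj p (fun ω => f2 (X ω)) (fun y => (y, y)) (fun a b h => (Prod.ext_iff.1 h).1)
  have hzero : condEnt p (fun ω => f2 (X ω)) (fun ω => f2 (X ω)) = 0 := by
    simp only [condEnt]
    rw [h22, sub_self]
  refine ⟨?_, by rw [hzero, mul_zero, zero_add]⟩
  -- main inequality
  have hswap : ent p (fun ω => (f1 (X ω), (f2 (X ω), U ω)))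
      = ent p (fun ω => (f2 (X ω), (f1 (X ω), U ω))) := by
    refine my_ent_comp_inj p (fun ω => (f2 (X ω), (f1 (X ω), U ω)))
      (fun v => (v.2.1, (v.1, v.2.2))) ?_
    intro a b h
    obtain ⟨h1, h2, h3⟩ : a.2.1 = b.2.1 ∧ a.1 = b.1 ∧ a.2.2 = b.2.2 := by
      simpa [Prod.ext_iff] using h
    exact Prod.ext h2 (Prod.ext h1 h3)
  have hchain : condEnt p (fun ω => f1 (X ω)) U - condEnt p (fun ω => f2 (X ω)) U
      = condEnt p (fun ω => f1 (X ω)) (fun ω => (f2 (X ω), U ω))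
        - condEnt p (fun ω => f2 (X ω)) (fun ω => (f1 (X ω), U ω)) := by
    simp only [condEnt]
    linarith [hswap]
  have hA : 0 ≤ condEnt p (fun ω => f2 (X ω)) U := my_condEnt_nonneg hnn _ _
  have hD : 0 ≤ condEnt p (fun ω => f2 (X ω)) (fun ω => (f1 (X ω), U ω)) :=
    my_condEnt_nonneg hnn _ _
  have hCE : condEnt p (fun ω => f1 (X ω)) (fun ω => (f2 (X ω), U ω))
      ≤ condEnt p (fun ω => f1 (X ω)) (fun ω => f2 (X ω)) :=
    my_condEnt_pair_le hnn _ _ _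
  have hb : 0 ≤ lam⁻¹ * p1 - p2 := by
    rcases eq_or_lt_of_le hp2.1 with h | h
    · have : 0 ≤ lam⁻¹ * p1 := mul_nonneg (inv_pos.2 hlam0).le hp1.1
      linarith
    · have h1 : lam * p2 ≤ p1 := (le_div_iff₀ h).1 hlam2
      have h3 : lam⁻¹ * (lam * p2) = p2 := by field_simp
      have h4 := mul_le_mul_of_nonneg_left h1 (inv_pos.2 hlam0).le
      linarith
  have hc' : lam⁻¹ - 1 ≤ 0 := by
    have : lam⁻¹ < 1 := inv_lt_one_of_one_lt₀ hlam1
    linarith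
  have h4 : (lam⁻¹ - 1) * condEnt p (fun ω => f2 (X ω)) U ≤ 0 :=
    mul_nonpos_of_nonpos_of_nonneg hc' hA
  have h5 : (lam⁻¹ * p1 - p2) * condEnt p (fun ω => f1 (X ω)) (fun ω => (f2 (X ω), U ω))
      ≤ (lam⁻¹ * p1 - p2) * condEnt p (fun ω => f1 (X ω)) (fun ω => f2 (X ω)) :=
    mul_le_mul_of_nonneg_left hCE hb
  have h6 : 0 ≤ (lam⁻¹ * p1 - p2) * condEnt p (fun ω => f2 (X ω)) (fun ω => (f1 (X ω), U ω)) :=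
    mul_nonneg hb hD
  have h7 : (lam⁻¹ * p1 - p2) * condEnt p (fun ω => f1 (X ω)) U
      - (lam⁻¹ * p1 - p2) * condEnt p (fun ω => f2 (X ω)) U
      = (lam⁻¹ * p1 - p2) * condEnt p (fun ω => f1 (X ω)) (fun ω => (f2 (X ω), U ω))
        - (lam⁻¹ * p1 - p2) * condEnt p (fun ω => f2 (X ω)) (fun ω => (f1 (X ω), U ω)) := by
    rw [← mul_sub, ← mul_sub, hchain]
  nlinarith [h4, h5, h6, h7]
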